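/- Let a be a real number with −1/2 < a < 1/2 and let h : ℝ → ℝ be twice differentiable. Then the function u(s) = √(1/2 + a·cos(2s)) · h(s) satisfies (1/2 + a·cos(2s))·u''(s) − a·sin(2s)·u'(s) + 2a·cos(2s)·u(s) = 0 for all s ∈ ℝ if and only if h satisfies (1/2 + a·cos(2s))·h''(s) − 3a·sin(2s)·h'(s) = 0 for all s ∈ ℝ. -/

import Mathlib

/-!
Writing `f = 1/2 + a·cos 2s`, the equation for `u` reads `f·u'' + (f'/2)·u' − (f''/2)·u = 0`.
For `u = √f·h` and any positive `f` this operator equals `√f·(f·h'' + (3/2)·f'·h')`,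
so, `√f` being nonzero, the two equations are equivalent.
-/

open Real

section SqrtMul

variable {f h : ℝ → ℝ}

theorem hasDerivAt_sqrt_mul {x : ℝ} (hfx : 0 < f x) (hf : DifferentiableAt ℝ f x)
    (hh : DifferentiableAt ℝ h x) :
    HasDerivAt (fun s => √(f s) * h s)
      (deriv f x / (2 * √(f x)) * h x + √(f x) * deriv h x) x :=
  (hf.hasDerivAt.sqrt hfx.ne').mul hh.hasDerivAt

theorem deriv_sqrt_mul (hf₀ : ∀ x, 0 < f x) (hf : Differentiable ℝ f) (hh : Differentiable ℝ h) :
    deriv (fun s => √(f s) * h s) =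
      fun x => deriv f x / (2 * √(f x)) * h x + √(f x) * deriv h x :=
  funext fun x => (hasDerivAt_sqrt_mul (hf₀ x) (hf x) (hh x)).deriv

theorem deriv_deriv_sqrt_mul_identity (hf₀ : ∀ x, 0 < f x) (hf : Differentiable ℝ f)
    (hf' : Differentiable ℝ (deriv f)) (hh : Differentiable ℝ h)
    (hh' : Differentiable ℝ (deriv h)) (x : ℝ) :
    f x * deriv (deriv fun s => √(f s) * h s) x
        + deriv f x / 2 * deriv (fun s => √(f s) * h s) x
        - deriv (deriv f) x / 2 * (√(f x) * h x) =
      √(f x) * (f x * deriv (deriv h) x + 3 / 2 * deriv f x * deriv h x) := by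
  have hsqrt_pos : 0 < √(f x) := sqrt_pos.mpr (hf₀ x)
  have hsqrt : HasDerivAt (fun s => √(f s)) (deriv f x / (2 * √(f x))) x :=
    (hf x).hasDerivAt.sqrt (hf₀ x).ne'
  have hsecond : HasDerivAt (fun s => deriv f s / (2 * √(f s)) * h s + √(f s) * deriv h s) _ x :=
    (((hf' x).hasDerivAt.div (hsqrt.const_mul 2) (by positivity)).mul (hh x).hasDerivAt).add
      (hsqrt.mul (hh' x).hasDerivAt)
  rw [deriv_sqrt_mul hf₀ hf hh, hsecond.deriv]
  simp only [Pi.div_apply]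
  have hsq : f x = √(f x) ^ 2 := (sq_sqrt (hf₀ x).le).symm
  -- abstracting `√(f x)` first keeps the rewrite `f x = g ^ 2` away from the `f x` under the root
  set g := √(f x)
  rw [hsq]
  field_simp
  ring

end SqrtMul

theorem half_add_mul_cos_pos {a : ℝ} (ha : |a| < 1 / 2) (t : ℝ) : 0 < 1 / 2 + a * cos t := by
  have hbound : |a * cos t| ≤ |a| := by
    rw [abs_mul]
    exact mul_le_of_le_one_right (abs_nonneg a) (abs_cos_le_one t)
  linarith [neg_abs_le (a * cos t)]

theorem hasDerivAt_half_add_mul_cos_two_mul (a s : ℝ) :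
    HasDerivAt (fun s => 1 / 2 + a * cos (2 * s)) (-(2 * a * sin (2 * s))) s :=
  ((((hasDerivAt_id' s).const_mul 2).cos.const_mul a).const_add (1 / 2)).congr_deriv (by ring)

theorem deriv_half_add_mul_cos_two_mul (a : ℝ) :
    deriv (fun s => 1 / 2 + a * cos (2 * s)) = fun s => -(2 * a * sin (2 * s)) :=
  funext fun s => (hasDerivAt_half_add_mul_cos_two_mul a s).deriv

theorem deriv_deriv_half_add_mul_cos_two_mul (a : ℝ) :
    deriv (deriv fun s => 1 / 2 + a * cos (2 * s)) = fun s => -(4 * a * cos (2 * s)) := by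
  rw [deriv_half_add_mul_cos_two_mul]
  funext s
  have hsin : HasDerivAt (fun s => -(2 * a * sin (2 * s))) _ s :=
    (((hasDerivAt_id' s).const_mul 2).sin.const_mul (2 * a)).neg
  rw [hsin.deriv]
  ring

/-- For twice differentiable `h`, `u(s) = √(1/2 + a·cos 2s)·h(s)` satisfies
`(1/2 + a·cos 2s)·u'' − a·sin(2s)·u' + 2a·cos(2s)·u = 0` on `ℝ` iff
`h` satisfies `(1/2 + a·cos 2s)·h'' − 3a·sin(2s)·h' = 0` on `ℝ`. -/
theorem stmt8 (a : ℝ) (ha : -(1/2) < a) (ha' : a < 1/2) (h : ℝ → ℝ)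
    (hh1 : Differentiable ℝ h) (hh2 : Differentiable ℝ (deriv h)) :
    (∀ s : ℝ,
      (1/2 + a * Real.cos (2*s)) *
          deriv (deriv fun s : ℝ => Real.sqrt (1/2 + a * Real.cos (2*s)) * h s) s
        - a * Real.sin (2*s) *
          deriv (fun s : ℝ => Real.sqrt (1/2 + a * Real.cos (2*s)) * h s) s
        + 2 * a * Real.cos (2*s) * (Real.sqrt (1/2 + a * Real.cos (2*s)) * h s) = 0) ↔
    (∀ s : ℝ,
      (1/2 + a * Real.cos (2*s)) * deriv (deriv h) s
        - 3 * a * Real.sin (2*s) * deriv h s = 0) := by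
  have hf₀ : ∀ s, 0 < 1 / 2 + a * cos (2 * s) :=
    fun s => half_add_mul_cos_pos (abs_lt.mpr ⟨ha, ha'⟩) _
  have hf : Differentiable ℝ fun s => 1 / 2 + a * cos (2 * s) :=
    fun s => (hasDerivAt_half_add_mul_cos_two_mul a s).differentiableAt
  have hf' : Differentiable ℝ (deriv fun s => 1 / 2 + a * cos (2 * s)) := by
    rw [deriv_half_add_mul_cos_two_mul]
    fun_prop
  refine forall_congr' fun s => ?_
  have key := deriv_deriv_sqrt_mul_identity hf₀ hf hf' hh1 hh2 s
  rw [deriv_deriv_half_add_mul_cos_two_mul, deriv_half_add_mul_cos_two_mul] at key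
  refine Iff.trans ?_ (mul_eq_zero_iff_left (sqrt_pos.mpr (hf₀ s)).ne')
  constructor <;> intro H
  · linear_combination H - key
  · linear_combination H + key
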